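/- arXiv:1509.07448 — 2 statements merged into one kernel-verified Lean document; each statement's English description precedes it below -/
import Mathlib

section
/- Let S be a real Banach space and F : [a,b] → S a continuous map (with a < b). Suppose that for every h in (a,b] the left derivative lim_{h'→h⁻} (F(h') − F(h))/(h'−h) exists and equals 0. Then F is constant on [a,b]. -/
open Filter Set Topology

/-- A continuous map `F : [a,b] → S` into a real Banach space whose left derivative
exists and is zero at every point of `(a,b]` is constant on `[a,b]`. -/
theorem stmt0 {S : Type*} [NormedAddCommGroup S] [NormedSpace ℝ S] [CompleteSpace S]
    (a b : ℝ) (hab : a < b) (F : ℝ → S)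
    (hcont : ContinuousOn F (Set.Icc a b))
    (hderiv : ∀ h ∈ Set.Ioc a b,
      Tendsto (fun h' => (h' - h)⁻¹ • (F h' - F h)) (nhdsWithin h (Set.Ico a h)) (nhds 0)) :
    ∀ x ∈ Set.Icc a b, ∀ y ∈ Set.Icc a b, F x = F y := by
  set G : ℝ → S := fun t => F (a + b - t) with hG
  have hmap : ∀ t ∈ Set.Icc a b, a + b - t ∈ Set.Icc a b := by
    intro t ht
    exact ⟨by linarith [ht.2], by linarith [ht.1]⟩
  have hGcont : ContinuousOn G (Set.Icc a b) := by
    apply hcont.comp (Continuous.continuousOn (by continuity)) hmap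
  have hGderiv : ∀ x ∈ Set.Ico a b, HasDerivWithinAt G 0 (Set.Ici x) x := by
    intro x hx
    rw [hasDerivWithinAt_iff_tendsto_slope]
    set h := a + b - x with hh
    have hhmem : h ∈ Set.Ioc a b := ⟨by simp [hh]; linarith [hx.2], by simp [hh]; linarith [hx.1]⟩
    have heq : ∀ y, slope G x y = -((a + b - y - h)⁻¹ • (F (a + b - y) - F h)) := by
      intro y
      have e : a + b - y - h = -(y - x) := by rw [hh]; ring
      simp only [slope_def_module, hG, hh, e, inv_neg, neg_smul, neg_neg]
      rw [show a + b - y - (a + b - x) = -(y - x) by ring, inv_neg, neg_smul, neg_neg]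
    have hIci : Set.Ici x \ {x} = Set.Ioi x := Set.Ici_sdiff_left
    rw [hIci]
    have htend : Tendsto (fun y => a + b - y) (nhdsWithin x (Set.Ioi x))
        (nhdsWithin h (Set.Ico a h)) := by
      have h1 : Tendsto (fun y => a + b - y) (nhdsWithin x (Set.Ioi x))
          (nhdsWithin h (Set.Iio h)) := by
        apply tendsto_nhdsWithin_of_tendsto_nhds_of_eventually_within
        · have : Continuous (fun y : ℝ => a + b - y) := by continuity
          simpa [hh] using (this.tendsto x).mono_left nhdsWithin_le_nhds
        · filter_upwards [eventually_mem_nhdsWithin] with y hy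
          simp only [Set.mem_Ioi] at hy
          have e : h = a + b - x := hh
          simp only [Set.mem_Iio, e]
          linarith
      refine h1.mono_right ?_
      rw [nhdsWithin, nhdsWithin]
      refine le_inf inf_le_left (le_principal_iff.2 ?_)
      have : Set.Ioo a h ∈ nhdsWithin h (Set.Iio h) := by
        apply Ioo_mem_nhdsLT_of_mem
        exact ⟨hhmem.1, le_refl h⟩
      filter_upwards [this] with y hy
      exact ⟨le_of_lt hy.1, hy.2⟩
    have hcmp := (hderiv h hhmem).comp htend
    have hfun : slope G x = fun y => -((a + b - y - h)⁻¹ • (F (a + b - y) - F h)) :=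
      funext heq
    rw [hfun]
    simpa [Function.comp] using hcmp.neg
  have key := constant_of_has_deriv_right_zero hGcont hGderiv
  have hFb : ∀ x ∈ Set.Icc a b, F x = F b := by
    intro x hx
    have h1 := key (a + b - x) (hmap x hx)
    simp only [hG] at h1
    have e1 : a + b - (a + b - x) = x := by ring
    rw [e1] at h1
    simpa using h1
  intro x hx y hy
  rw [hFb x hx, hFb y hy]
end

section
/- Let f : [a,b] → ℝ^d be continuous and suppose there exist constants C ≥ 0, γ > 1 such that for all a ≤ h' < h ≤ b one has ∫₀^{b−a} |f(min(r+h, b)) − f(min(r+h', b))| dr ≤ C |h − h'|^γ + |h−h'| λ(|h−h'|), where λ : [0,∞) → [0,∞) satisfies λ(r) → 0 as r → 0⁺. Then f is constant on [a,b]. -/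
open Filter Set Topology

lemma contAux {d : ℕ} (a b : ℝ) (hab : a ≤ b) (f : ℝ → EuclideanSpace ℝ (Fin d))
    (hf : ContinuousOn f (Set.Icc a b)) (c : ℝ) (hc : c ∈ Set.Icc a b) :
    ContinuousOn (fun r => f (min (r + c) b)) (Icc 0 (b - a)) := by
  apply hf.comp (Continuous.continuousOn (by continuity))
  intro r hr
  exact ⟨le_min (by linarith [hc.1, hr.1]) hab, min_le_right _ _⟩

lemma intAux {d : ℕ} (a b : ℝ) (hab : a ≤ b) (f : ℝ → EuclideanSpace ℝ (Fin d))
    (hf : ContinuousOn f (Set.Icc a b)) (c₁ c₂ : ℝ) (hc₁ : c₁ ∈ Set.Icc a b)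
    (hc₂ : c₂ ∈ Set.Icc a b) :
    IntervalIntegrable (fun r => ‖f (min (r + c₁) b) - f (min (r + c₂) b)‖)
      MeasureTheory.volume 0 (b - a) := by
  apply ContinuousOn.intervalIntegrable
  rw [uIcc_of_le (by linarith : (0:ℝ) ≤ b - a)]
  exact ((contAux a b hab f hf c₁ hc₁).sub (contAux a b hab f hf c₂ hc₂)).norm

lemma zero_of_integral (L : ℝ) (hL : 0 < L) (g : ℝ → ℝ) (hg : ContinuousOn g (Icc 0 L))
    (hnn : ∀ r, 0 ≤ g r) (hI : (∫ r in (0:ℝ)..L, g r) ≤ 0) : g 0 = 0 := by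
  by_contra hne
  have hc : 0 < g 0 := lt_of_le_of_ne (hnn 0) (Ne.symm hne)
  have hcw : ContinuousWithinAt g (Icc 0 L) 0 := hg 0 ⟨le_refl 0, hL.le⟩
  have hev : g ⁻¹' Ioi (g 0 / 2) ∈ nhdsWithin 0 (Icc 0 L) :=
    hcw (Ioi_mem_nhds (half_lt_self hc))
  rw [Metric.mem_nhdsWithin_iff] at hev
  obtain ⟨ε, hε, hball⟩ := hev
  set δ := min (ε / 2) L with hδdef
  have hδ : 0 < δ := lt_min (half_pos hε) hL
  have hδL : δ ≤ L := min_le_right _ _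
  have hgl : ∀ r ∈ Icc (0:ℝ) δ, g 0 / 2 ≤ g r := by
    intro r hr
    have hrb : r ∈ Metric.ball (0:ℝ) ε ∩ Icc 0 L := by
      constructor
      · simp only [Metric.mem_ball, Real.dist_eq, sub_zero]
        rw [abs_of_nonneg hr.1]
        calc r ≤ δ := hr.2
          _ ≤ ε / 2 := min_le_left _ _
          _ < ε := half_lt_self hε
      · exact ⟨hr.1, hr.2.trans hδL⟩
    exact le_of_lt (hball hrb)
  have hgi : IntervalIntegrable g MeasureTheory.volume 0 L := by
    apply ContinuousOn.intervalIntegrable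
    rwa [uIcc_of_le hL.le]
  have hgi1 : IntervalIntegrable g MeasureTheory.volume 0 δ := by
    apply hgi.mono_set
    rw [uIcc_of_le hδ.le, uIcc_of_le hL.le]
    exact Icc_subset_Icc le_rfl hδL
  have hgi2 : IntervalIntegrable g MeasureTheory.volume δ L := by
    apply hgi.mono_set
    rw [uIcc_of_le hδL, uIcc_of_le hL.le]
    exact Icc_subset_Icc hδ.le le_rfl
  have hsplit : (∫ r in (0:ℝ)..L, g r) = (∫ r in (0:ℝ)..δ, g r) + ∫ r in δ..L, g r :=
    (intervalIntegral.integral_add_adjacent_intervals hgi1 hgi2).symm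
  have h1 : δ * (g 0 / 2) ≤ ∫ r in (0:ℝ)..δ, g r := by
    have := intervalIntegral.integral_mono_on hδ.le
      (intervalIntegrable_const (c := g 0 / 2)) hgi1 hgl
    simp only [intervalIntegral.integral_const, smul_eq_mul, sub_zero] at this
    exact this
  have h2 : 0 ≤ ∫ r in δ..L, g r :=
    intervalIntegral.integral_nonneg hδL (fun x _ => hnn x)
  nlinarith [hsplit, h1, h2, hI, mul_pos hδ (half_pos hc)]

lemma key {d : ℕ} (a b : ℝ) (hab : a < b) (C γ : ℝ) (hC : 0 ≤ C) (hγ : 1 < γ)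
    (f : ℝ → EuclideanSpace ℝ (Fin d)) (hf : ContinuousOn f (Set.Icc a b))
    (lam : ℝ → ℝ) (hlam0 : ∀ r, 0 ≤ lam r)
    (hlam : Tendsto lam (nhdsWithin 0 (Set.Ioi 0)) (nhds 0))
    (hest : ∀ h' h, a ≤ h' → h' < h → h ≤ b →
      (∫ r in (0:ℝ)..(b - a), ‖f (min (r + h) b) - f (min (r + h') b)‖) ≤
        C * |h - h'| ^ γ + |h - h'| * lam |h - h'|)
    (h' h : ℝ) (h1 : a ≤ h') (h2 : h' < h) (h3 : h ≤ b) : f h = f h' := by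
  set t := h - h' with htdef
  have ht : 0 < t := by simp [htdef]; linarith
  set g := fun r => ‖f (min (r + h) b) - f (min (r + h') b)‖ with hgdef
  have hmem : ∀ u : ℝ, h' ≤ u → u ≤ h → u ∈ Set.Icc a b :=
    fun u hu1 hu2 => ⟨h1.trans hu1, hu2.trans h3⟩
  -- Step A: subdivision bound
  have hbound : ∀ n : ℕ, 1 ≤ n →
      (∫ r in (0:ℝ)..(b - a), g r) ≤ n * (C * (t / n) ^ γ + (t / n) * lam (t / n)) := by
    intro n hn
    have hn0 : (0:ℝ) < n := by exact_mod_cast hn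
    set δ := t / n with hδdef
    have hδ : 0 < δ := div_pos ht hn0
    set c : ℕ → ℝ := fun k => h' + k * δ with hcdef
    have hcn : c n = h := by
      simp only [hcdef, hδdef, htdef]
      field_simp
      ring
    have hmono : ∀ k j : ℕ, k ≤ j → c k ≤ c j := by
      intro k j hkj
      have : (k:ℝ) ≤ j := by exact_mod_cast hkj
      simp only [hcdef]
      nlinarith
    have hck : ∀ k : ℕ, k ≤ n → c k ∈ Set.Icc a b := by
      intro k hk
      refine hmem _ ?_ ?_
      · have : (0:ℝ) ≤ k * δ := by positivity
        simp only [hcdef]; linarith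
      · rw [← hcn]; exact hmono k n hk
    have hpt : ∀ r : ℝ, g r ≤
        ∑ k ∈ Finset.range n, ‖f (min (r + c (k+1)) b) - f (min (r + c k) b)‖ := by
      intro r
      have htel : ∑ k ∈ Finset.range n,
          (f (min (r + c (k+1)) b) - f (min (r + c k) b)) =
          f (min (r + c n) b) - f (min (r + c 0) b) :=
        Finset.sum_range_sub (fun k => f (min (r + c k) b)) n
      have hc0 : c 0 = h' := by simp [hcdef]
      rw [hcn, hc0] at htel
      calc g r = ‖∑ k ∈ Finset.range n,
            (f (min (r + c (k+1)) b) - f (min (r + c k) b))‖ := by rw [htel]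
        _ ≤ _ := norm_sum_le _ _
    have hint : ∀ k ∈ Finset.range n, IntervalIntegrable
        (fun r => ‖f (min (r + c (k+1)) b) - f (min (r + c k) b)‖)
        MeasureTheory.volume 0 (b - a) := by
      intro k hk
      rw [Finset.mem_range] at hk
      exact intAux a b hab.le f hf _ _ (hck (k+1) hk) (hck k hk.le)
    have hI1 : (∫ r in (0:ℝ)..(b - a), g r) ≤
        ∑ k ∈ Finset.range n, ∫ r in (0:ℝ)..(b - a),
          ‖f (min (r + c (k+1)) b) - f (min (r + c k) b)‖ := by
      rw [← intervalIntegral.integral_finset_sum hint]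
      apply intervalIntegral.integral_mono_on (by linarith)
        (intAux a b hab.le f hf h h' (hmem h h2.le le_rfl) (hmem h' le_rfl h2.le)) ?_
        (fun r _ => hpt r)
      · apply ContinuousOn.intervalIntegrable
        rw [uIcc_of_le (by linarith : (0:ℝ) ≤ b - a)]
        apply continuousOn_finset_sum
        intro k hk
        rw [Finset.mem_range] at hk
        exact ((contAux a b hab.le f hf _ (hck (k+1) hk)).sub
          (contAux a b hab.le f hf _ (hck k hk.le))).norm
    have hI2 : ∀ k ∈ Finset.range n,
        (∫ r in (0:ℝ)..(b - a), ‖f (min (r + c (k+1)) b) - f (min (r + c k) b)‖) ≤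
          C * δ ^ γ + δ * lam δ := by
      intro k hk
      rw [Finset.mem_range] at hk
      have hdiff : c (k+1) - c k = δ := by
        simp only [hcdef]; push_cast; ring
      have := hest (c k) (c (k+1)) (hck k hk.le).1 (by simp [hcdef]; nlinarith)
        (hck (k+1) hk).2
      rwa [hdiff, abs_of_pos hδ] at this
    calc (∫ r in (0:ℝ)..(b - a), g r) ≤ _ := hI1
      _ ≤ ∑ _k ∈ Finset.range n, (C * δ ^ γ + δ * lam δ) := Finset.sum_le_sum hI2
      _ = n * (C * δ ^ γ + δ * lam δ) := by
          rw [Finset.sum_const, Finset.card_range, nsmul_eq_mul]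
  -- Step B: the bound tends to 0
  have hT : Tendsto (fun n : ℕ => (n:ℝ) * (C * (t / n) ^ γ + (t / n) * lam (t / n)))
      atTop (nhds 0) := by
    have hA : Tendsto (fun n : ℕ => C * t ^ γ * (n:ℝ) ^ (1 - γ)) atTop (nhds 0) := by
      have h0 : Tendsto (fun x : ℝ => x ^ (1 - γ)) atTop (nhds 0) := by
        have := tendsto_rpow_neg_atTop (by linarith : 0 < γ - 1)
        simpa [neg_sub] using this
      have := (h0.comp tendsto_natCast_atTop_atTop).const_mul (C * t ^ γ)
      simpa using this
    have hB : Tendsto (fun n : ℕ => t * lam (t / n)) atTop (nhds 0) := by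
      have hq : Tendsto (fun n : ℕ => t / (n:ℝ)) atTop (nhdsWithin 0 (Set.Ioi 0)) := by
        apply tendsto_nhdsWithin_of_tendsto_nhds_of_eventually_within
        · exact tendsto_const_div_atTop_nhds_zero_nat t
        · filter_upwards [eventually_gt_atTop 0] with n hn
          exact div_pos ht (by exact_mod_cast hn)
      have := (hlam.comp hq).const_mul t
      simpa using this
    have := hA.add hB
    rw [add_zero] at this
    apply this.congr'
    filter_upwards [eventually_ge_atTop 1] with n hn
    have hn0 : (0:ℝ) < n := by exact_mod_cast hn
    have h1 : (t / n) ^ γ = t ^ γ / (n:ℝ) ^ γ := Real.div_rpow ht.le hn0.le γ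
    have h2 : (n:ℝ) ^ (1 - γ) = (n:ℝ) / (n:ℝ) ^ γ := by
      rw [Real.rpow_sub hn0, Real.rpow_one]
    have h3 : (0:ℝ) < (n:ℝ) ^ γ := Real.rpow_pos_of_pos hn0 γ
    rw [h1, h2]
    field_simp
  have hIle : (∫ r in (0:ℝ)..(b - a), g r) ≤ 0 := by
    apply ge_of_tendsto hT
    filter_upwards [eventually_ge_atTop 1] with n hn
    exact hbound n hn
  have hg0 : g 0 = 0 := by
    apply zero_of_integral (b - a) (by linarith) g ?_ (fun r => norm_nonneg _) hIle
    exact ((contAux a b hab.le f hf h (hmem h h2.le le_rfl)).sub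
      (contAux a b hab.le f hf h' (hmem h' le_rfl h2.le))).norm
  have : f (min (0 + h) b) = f (min (0 + h') b) := by
    rwa [hgdef, norm_sub_eq_zero_iff] at hg0
  rwa [zero_add, zero_add, min_eq_left h3, min_eq_left (h2.le.trans h3)] at this

/-- If a continuous `f : [a,b] → ℝ^d` satisfies an `L¹`-modulus estimate for its shifts
with exponent `γ > 1` plus a vanishing modulus term, then `f` is constant on `[a,b]`. -/
theorem stmt1 {d : ℕ} (a b : ℝ) (hab : a < b) (C γ : ℝ) (hC : 0 ≤ C) (hγ : 1 < γ)
    (f : ℝ → EuclideanSpace ℝ (Fin d)) (hf : ContinuousOn f (Set.Icc a b))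
    (lam : ℝ → ℝ) (hlam0 : ∀ r, 0 ≤ lam r)
    (hlam : Tendsto lam (nhdsWithin 0 (Set.Ioi 0)) (nhds 0))
    (hest : ∀ h' h, a ≤ h' → h' < h → h ≤ b →
      (∫ r in (0:ℝ)..(b - a), ‖f (min (r + h) b) - f (min (r + h') b)‖) ≤
        C * |h - h'| ^ γ + |h - h'| * lam |h - h'|) :
    ∀ x ∈ Set.Icc a b, ∀ y ∈ Set.Icc a b, f x = f y := by
  intro x hx y hy
  rcases lt_trichotomy x y with hxy | hxy | hxy
  · exact (key a b hab C γ hC hγ f hf lam hlam0 hlam hest x y hx.1 hxy hy.2).symm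
  · rw [hxy]
  · exact key a b hab C γ hC hγ f hf lam hlam0 hlam hest y x hy.1 hxy hx.2
end
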